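/- For every θ > 1 and all integers k, m ≥ 0, (2/√(θ²−1)) ∫_ℂ H_k(z) conj(H_m(z)) exp[−2(Re z)²/(θ+1) − 2(Im z)²/(θ−1)] dσ(z) = δ_{km} · π (2θ)^k k!, where conj denotes complex conjugation. -/

import Mathlib

open MeasureTheory Real Polynomial

/-- Physicists' Hermite polynomials as integer polynomials. -/
noncomputable def Hp : ℕ → Polynomial ℤ
  | 0 => 1
  | n + 1 => 2 * X * Hp n - derivative (Hp n)

lemma Hp_zero : Hp 0 = 1 := rfl
lemma Hp_succ (n : ℕ) : Hp (n + 1) = 2 * X * Hp n - derivative (Hp n) := rfl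

lemma derivative_Hp (n : ℕ) :
    derivative (Hp (n + 1)) = C (2 * (n + 1) : ℤ) * Hp n := by
  induction n with
  | zero => simp [Hp_succ, Hp_zero]
  | succ n ih =>
      rw [Hp_succ (n+1)]
      rw [derivative_sub, derivative_mul, derivative_mul, ih]
      rw [Hp_succ n]
      push_cast
      ring_nf
      simp [derivative_X, derivative_ofNat]
      ring

lemma derivative_Hp' (n : ℕ) :
    derivative (Hp n) = C (2 * n : ℤ) * Hp (n - 1) := by
  cases n with
  | zero => simp [Hp_zero]
  | succ n => rw [derivative_Hp]; push_cast; simp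

/-- The `k`-th physicists' Hermite polynomial, as an entire function:
`H_k(z) = (-1)^k e^{z²} (d/dz)^k e^{-z²}`. -/
noncomputable def physHermite (k : ℕ) (z : ℂ) : ℂ :=
  (-1 : ℂ) ^ k * Complex.exp (z ^ 2) * iteratedDeriv k (fun w => Complex.exp (-(w ^ 2))) z

lemma hasDerivAt_gauss (z : ℂ) :
    HasDerivAt (fun w : ℂ => Complex.exp (-(w ^ 2))) (-(2 * z) * Complex.exp (-(z ^ 2))) z := by
  have h1 : HasDerivAt (fun w : ℂ => -(w ^ 2)) (-(2 * z)) z := by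
    simpa using ((hasDerivAt_pow 2 z).fun_neg)
  simpa [mul_comm] using h1.cexp

lemma iteratedDeriv_gauss (k : ℕ) (z : ℂ) :
    iteratedDeriv k (fun w => Complex.exp (-(w ^ 2))) z
      = (-1 : ℂ) ^ k * aeval z (Hp k) * Complex.exp (-(z ^ 2)) := by
  induction k generalizing z with
  | zero => simp [Hp_zero]
  | succ k ih =>
      rw [iteratedDeriv_succ]
      have hfun : iteratedDeriv k (fun w => Complex.exp (-(w ^ 2)))
          = fun z => (-1 : ℂ) ^ k * (aeval z (Hp k) * Complex.exp (-(z ^ 2))) := by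
        funext w; rw [ih]; ring
      rw [hfun]
      have h1 : HasDerivAt (fun z : ℂ => aeval z (Hp k)) (aeval z (derivative (Hp k))) z :=
        (Hp k).hasDerivAt_aeval z
      have h2 := (h1.fun_mul (hasDerivAt_gauss z))
      have h3 := h2.const_mul ((-1 : ℂ) ^ k)
      beta_reduce at h3
      rw [h3.deriv]
      rw [Hp_succ k]
      simp only [map_sub, map_mul, map_ofNat, aeval_X]
      ring

lemma physHermite_eq (k : ℕ) (z : ℂ) : physHermite k z = aeval z (Hp k) := by
  rw [physHermite, iteratedDeriv_gauss]
  have h1 : Complex.exp (z ^ 2) * Complex.exp (-(z ^ 2)) = 1 := by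
    rw [← Complex.exp_add]; simp
  have h2 : ((-1 : ℂ) ^ k) * ((-1 : ℂ) ^ k) = 1 := by
    rw [← pow_add]; exact (neg_one_pow_eq_one_iff_even (by norm_num)).mpr ⟨k, by ring⟩
  calc (-1 : ℂ) ^ k * Complex.exp (z ^ 2) * ((-1) ^ k * (aeval z) (Hp k) * Complex.exp (-(z ^ 2)))
      = ((-1 : ℂ) ^ k * (-1) ^ k) * (Complex.exp (z ^ 2) * Complex.exp (-(z ^ 2))) * aeval z (Hp k) := by ring
    _ = aeval z (Hp k) := by rw [h1, h2]; ring

open Filter Topology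

lemma poly_norm_bound (q : Polynomial ℂ) :
    ∃ C : ℝ, 0 ≤ C ∧ ∀ z : ℂ, ‖eval z q‖ ≤ C * (1 + ‖z‖) ^ q.natDegree := by
  refine ⟨∑ i ∈ Finset.range (q.natDegree + 1), ‖q.coeff i‖,
    Finset.sum_nonneg fun _ _ => norm_nonneg _, fun z => ?_⟩
  rw [eval_eq_sum_range]
  refine (norm_sum_le _ _).trans ?_
  rw [Finset.sum_mul]
  refine Finset.sum_le_sum fun i hi => ?_
  rw [norm_mul, norm_pow]
  have h1 : ‖z‖ ^ i ≤ (1 + ‖z‖) ^ q.natDegree :=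
    calc ‖z‖ ^ i ≤ (1 + ‖z‖) ^ i :=
          pow_le_pow_left₀ (norm_nonneg z) (by linarith [norm_nonneg z]) i
      _ ≤ (1 + ‖z‖) ^ q.natDegree :=
          pow_le_pow_right₀ (by linarith [norm_nonneg z])
            (Nat.lt_succ_iff.mp (Finset.mem_range.mp hi))
  exact mul_le_mul_of_nonneg_left h1 (norm_nonneg _)

lemma gauss_decay {c : ℝ} (hc : 0 < c) (n : ℕ) {u : ℝ} (hu : 0 ≤ u) :
    (1 + u) ^ n * Real.exp (-(c * u)) ≤ 2 ^ n * (1 + n.factorial / c ^ n) := by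
  have hfact : u ^ n * Real.exp (-(c * u)) ≤ n.factorial / c ^ n := by
    have h1 : (c * u) ^ n / n.factorial ≤ Real.exp (c * u) := by
      refine le_trans ?_ (Real.sum_le_exp_of_nonneg (mul_nonneg hc.le hu) (n + 1))
      exact Finset.single_le_sum (f := fun i => (c * u) ^ i / i.factorial)
        (fun i _ => by positivity) (Finset.self_mem_range_succ n)
    have h2 : (c * u) ^ n ≤ n.factorial * Real.exp (c * u) := by
      rw [div_le_iff₀ (by positivity)] at h1
      linarith
    have h3 : u ^ n ≤ n.factorial * Real.exp (c * u) / c ^ n := by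
      rw [le_div_iff₀ (by positivity)]
      calc u ^ n * c ^ n = (c * u) ^ n := by ring
        _ ≤ _ := h2
    calc u ^ n * Real.exp (-(c * u))
        ≤ (n.factorial * Real.exp (c * u) / c ^ n) * Real.exp (-(c * u)) :=
          mul_le_mul_of_nonneg_right h3 (Real.exp_pos _).le
      _ = n.factorial / c ^ n * (Real.exp (c * u) * Real.exp (-(c * u))) := by ring
      _ = n.factorial / c ^ n := by rw [← Real.exp_add]; simp
  have hexp1 : Real.exp (-(c * u)) ≤ 1 := by
    rw [← Real.exp_zero]
    exact Real.exp_le_exp.mpr (by nlinarith)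
  have hpow : (1 + u) ^ n ≤ 2 ^ n * (1 + u ^ n) := by
    calc (1 + u) ^ n ≤ 2 ^ (n - 1) * (1 ^ n + u ^ n) := add_pow_le (by norm_num) hu n
      _ ≤ 2 ^ n * (1 + u ^ n) := by
          rw [one_pow]
          exact mul_le_mul_of_nonneg_right
            (pow_le_pow_right₀ (by norm_num) (Nat.sub_le n 1)) (by positivity)
  calc (1 + u) ^ n * Real.exp (-(c * u))
      ≤ (2 ^ n * (1 + u ^ n)) * Real.exp (-(c * u)) :=
        mul_le_mul_of_nonneg_right hpow (Real.exp_pos _).le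
    _ = 2 ^ n * (Real.exp (-(c * u)) + u ^ n * Real.exp (-(c * u))) := by ring
    _ ≤ 2 ^ n * (1 + n.factorial / c ^ n) := by
        have h4 : (0:ℝ) ≤ 2 ^ n := by positivity
        nlinarith [hfact, hexp1]

lemma gauss_split {c : ℝ} (x : ℝ) :
    Real.exp (-c * x ^ 2) = Real.exp (-(c / 2 * x ^ 2)) * Real.exp (-(c / 2 * x ^ 2)) := by
  rw [← Real.exp_add]; ring_nf

lemma polyweight_le {c : ℝ} (hc : 0 < c) (n : ℕ) (x : ℝ) :
    (1 + x ^ 2) ^ n * Real.exp (-c * x ^ 2)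
      ≤ (2 ^ n * (1 + n.factorial / (c / 2) ^ n)) * Real.exp (-(c / 2) * x ^ 2) := by
  have hc2 : 0 < c / 2 := by linarith
  have key := gauss_decay hc2 n (sq_nonneg x)
  calc (1 + x ^ 2) ^ n * Real.exp (-c * x ^ 2)
      = ((1 + x ^ 2) ^ n * Real.exp (-(c / 2 * x ^ 2))) * Real.exp (-(c / 2 * x ^ 2)) := by
        rw [gauss_split x]; ring
    _ ≤ (2 ^ n * (1 + n.factorial / (c / 2) ^ n)) * Real.exp (-(c / 2) * x ^ 2) := by
        rw [show -(c / 2) * x ^ 2 = -(c / 2 * x ^ 2) from by ring]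
        exact mul_le_mul_of_nonneg_right key (Real.exp_pos _).le

lemma integrable_polyweight {c : ℝ} (hc : 0 < c) (n : ℕ) :
    MeasureTheory.Integrable (fun x : ℝ => (1 + x ^ 2) ^ n * Real.exp (-c * x ^ 2)) := by
  have hc2 : 0 < c / 2 := by linarith
  refine MeasureTheory.Integrable.mono'
    ((integrable_exp_neg_mul_sq hc2).const_mul (2 ^ n * (1 + n.factorial / (c / 2) ^ n))) ?_ ?_
  · exact ((continuous_const.add (continuous_pow 2)).pow n |>.mul
      ((continuous_const.mul (continuous_pow 2)).rexp)).aestronglyMeasurable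
  · refine Eventually.of_forall fun x => ?_
    rw [Real.norm_eq_abs, abs_of_nonneg (by positivity)]
    exact polyweight_le hc n x

lemma tendsto_polyweight {c : ℝ} (hc : 0 < c) (n : ℕ) :
    Tendsto (fun x : ℝ => (1 + x ^ 2) ^ n * Real.exp (-c * x ^ 2)) (cocompact ℝ) (𝓝 0) := by
  have hc2 : 0 < c / 2 := by linarith
  have h1 : Tendsto (fun x : ℝ => c / 2 * x ^ 2) (cocompact ℝ) atTop := by
    have h2 : Tendsto (fun t : ℝ => c / 2 * t ^ 2) atTop atTop := by
      refine Tendsto.const_mul_atTop hc2 ?_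
      simpa [sq] using Tendsto.atTop_mul_atTop₀ (tendsto_id (α := ℝ)) tendsto_id
    have h3 : (fun x : ℝ => c / 2 * x ^ 2) = (fun t : ℝ => c / 2 * t ^ 2) ∘ (fun x => ‖x‖) := by
      funext x; simp [sq_abs]
    rw [h3]
    exact h2.comp tendsto_norm_cocompact_atTop
  have h4 : Tendsto (fun x : ℝ => (2 ^ n * (1 + n.factorial / (c / 2) ^ n)) *
      Real.exp (-(c / 2) * x ^ 2)) (cocompact ℝ) (𝓝 0) := by
    have h5 : Tendsto (fun x : ℝ => Real.exp (-(c / 2) * x ^ 2)) (cocompact ℝ) (𝓝 0) := by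
      have := Real.tendsto_exp_neg_atTop_nhds_zero.comp h1
      simpa [Function.comp_def, neg_mul] using this
    simpa using h5.const_mul (2 ^ n * (1 + (n.factorial : ℝ) / (c / 2) ^ n))
  refine squeeze_zero_norm (fun x => ?_) h4
  rw [Real.norm_eq_abs, abs_of_nonneg (by positivity)]
  exact polyweight_le hc n x

noncomputable def Zc (p : ℝ × ℝ) : ℂ := (p.1 : ℂ) + (p.2 : ℂ) * Complex.I
noncomputable def Zb (p : ℝ × ℝ) : ℂ := (p.1 : ℂ) - (p.2 : ℂ) * Complex.I

lemma continuous_Zc : Continuous Zc :=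
  ((Complex.continuous_ofReal.comp continuous_fst).add
    ((Complex.continuous_ofReal.comp continuous_snd).mul continuous_const))

lemma continuous_Zb : Continuous Zb :=
  ((Complex.continuous_ofReal.comp continuous_fst).sub
    ((Complex.continuous_ofReal.comp continuous_snd).mul continuous_const))

lemma norm_Zc_le (p : ℝ × ℝ) : ‖Zc p‖ ≤ |p.1| + |p.2| := by
  refine (norm_add_le _ _).trans ?_
  simp [Complex.norm_real]

lemma norm_Zb_le (p : ℝ × ℝ) : ‖Zb p‖ ≤ |p.1| + |p.2| := by
  refine (norm_sub_le _ _).trans ?_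
  simp [Complex.norm_real]

lemma one_add_abs_le (x : ℝ) : 1 + |x| ≤ 2 * (1 + x ^ 2) := by
  nlinarith [sq_nonneg (|x| - 1), sq_abs x, abs_nonneg x]

lemma one_add_norm_le (z : ℂ) (p : ℝ × ℝ) (h : ‖z‖ ≤ |p.1| + |p.2|) :
    1 + ‖z‖ ≤ (2 * (1 + p.1 ^ 2)) * (2 * (1 + p.2 ^ 2)) := by
  have h1 := one_add_abs_le p.1
  have h2 := one_add_abs_le p.2
  nlinarith [abs_nonneg p.1, abs_nonneg p.2, sq_nonneg p.1, sq_nonneg p.2]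

/-- Bound for a single polynomial factor. -/
lemma single_poly_bound (P : Polynomial ℤ) (z : ℂ) (p : ℝ × ℝ) (h : ‖z‖ ≤ |p.1| + |p.2|)
    {C : ℝ} {d : ℕ} (hC : 0 ≤ C)
    (hb : ∀ w : ℂ, ‖eval w (P.map (algebraMap ℤ ℂ))‖ ≤ C * (1 + ‖w‖) ^ d) :
    ‖(aeval z P : ℂ)‖ ≤ C * ((2 * (1 + p.1 ^ 2)) * (2 * (1 + p.2 ^ 2))) ^ d := by
  have h0 : (aeval z P : ℂ) = eval z (P.map (algebraMap ℤ ℂ)) := by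
    rw [aeval_def, eval_map]
  rw [h0]
  refine (hb z).trans ?_
  have h1 : (1 + ‖z‖) ^ d ≤ ((2 * (1 + p.1 ^ 2)) * (2 * (1 + p.2 ^ 2))) ^ d :=
    pow_le_pow_left₀ (by positivity) (one_add_norm_le z p h) d
  exact mul_le_mul_of_nonneg_left h1 hC

lemma master_bound (P Q : Polynomial ℤ) :
    ∃ d : ℕ, ∃ C : ℝ, 0 ≤ C ∧ ∀ p : ℝ × ℝ,
      ‖(aeval (Zc p) P * aeval (Zb p) Q : ℂ)‖
        ≤ C * ((1 + p.1 ^ 2) ^ d * (1 + p.2 ^ 2) ^ d) := by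
  obtain ⟨C₁, hC₁, h₁⟩ := poly_norm_bound (P.map (algebraMap ℤ ℂ))
  obtain ⟨C₂, hC₂, h₂⟩ := poly_norm_bound (Q.map (algebraMap ℤ ℂ))
  set d₁ := (P.map (algebraMap ℤ ℂ)).natDegree
  set d₂ := (Q.map (algebraMap ℤ ℂ)).natDegree
  refine ⟨d₁ + d₂, C₁ * C₂ * 4 ^ (d₁ + d₂), by positivity, fun p => ?_⟩
  rw [norm_mul]
  have b₁ := single_poly_bound P (Zc p) p (norm_Zc_le p) hC₁ h₁
  have b₂ := single_poly_bound Q (Zb p) p (norm_Zb_le p) hC₂ h₂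
  calc ‖(aeval (Zc p) P : ℂ)‖ * ‖(aeval (Zb p) Q : ℂ)‖
      ≤ (C₁ * ((2 * (1 + p.1 ^ 2)) * (2 * (1 + p.2 ^ 2))) ^ d₁) *
        (C₂ * ((2 * (1 + p.1 ^ 2)) * (2 * (1 + p.2 ^ 2))) ^ d₂) := by
        exact mul_le_mul b₁ b₂ (norm_nonneg _) (by positivity)
    _ = C₁ * C₂ * 4 ^ (d₁ + d₂) * ((1 + p.1 ^ 2) ^ (d₁ + d₂) * (1 + p.2 ^ 2) ^ (d₁ + d₂)) := by
        rw [show (4:ℝ) ^ (d₁+d₂) = 2 ^ (d₁+d₂) * 2 ^ (d₁+d₂) from by rw [← mul_pow]; norm_num,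
          pow_add, pow_add, pow_add]
        simp only [mul_pow]
        ring

noncomputable def GG (c₁ c₂ : ℝ) (p : ℝ × ℝ) : ℝ :=
  Real.exp (-c₁ * p.1 ^ 2) * Real.exp (-c₂ * p.2 ^ 2)

noncomputable def FF (c₁ c₂ : ℝ) (P Q : Polynomial ℤ) (p : ℝ × ℝ) : ℂ :=
  aeval (Zc p) P * aeval (Zb p) Q * (GG c₁ c₂ p : ℂ)

noncomputable def TT (c₁ c₂ : ℝ) (P Q : Polynomial ℤ) : ℂ :=
  ∫ p : ℝ × ℝ, FF c₁ c₂ P Q p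

lemma continuous_GG (c₁ c₂ : ℝ) : Continuous (GG c₁ c₂) :=
  ((continuous_const.mul ((continuous_fst).pow 2)).rexp).mul
    ((continuous_const.mul ((continuous_snd).pow 2)).rexp)

lemma continuous_FF (c₁ c₂ : ℝ) (P Q : Polynomial ℤ) : Continuous (FF c₁ c₂ P Q) := by
  refine (((P.continuous_aeval).comp continuous_Zc).mul
    ((Q.continuous_aeval).comp continuous_Zb)).mul ?_
  exact Complex.continuous_ofReal.comp (continuous_GG c₁ c₂)

lemma norm_FF_le (c₁ c₂ : ℝ) (P Q : Polynomial ℤ) {d : ℕ} {C : ℝ}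
    (hb : ∀ p : ℝ × ℝ, ‖(aeval (Zc p) P * aeval (Zb p) Q : ℂ)‖
        ≤ C * ((1 + p.1 ^ 2) ^ d * (1 + p.2 ^ 2) ^ d)) (p : ℝ × ℝ) :
    ‖FF c₁ c₂ P Q p‖ ≤ C * (((1 + p.1 ^ 2) ^ d * Real.exp (-c₁ * p.1 ^ 2)) *
      ((1 + p.2 ^ 2) ^ d * Real.exp (-c₂ * p.2 ^ 2))) := by
  rw [FF, norm_mul, Complex.norm_real, Real.norm_eq_abs, GG,
    abs_of_nonneg (by positivity)]
  calc ‖(aeval (Zc p) P * aeval (Zb p) Q : ℂ)‖ * (Real.exp (-c₁ * p.1 ^ 2) * Real.exp (-c₂ * p.2 ^ 2))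
      ≤ (C * ((1 + p.1 ^ 2) ^ d * (1 + p.2 ^ 2) ^ d)) *
        (Real.exp (-c₁ * p.1 ^ 2) * Real.exp (-c₂ * p.2 ^ 2)) :=
        mul_le_mul_of_nonneg_right (hb p) (by positivity)
    _ = C * (((1 + p.1 ^ 2) ^ d * Real.exp (-c₁ * p.1 ^ 2)) *
        ((1 + p.2 ^ 2) ^ d * Real.exp (-c₂ * p.2 ^ 2))) := by ring

lemma integrable_FF {c₁ c₂ : ℝ} (h₁ : 0 < c₁) (h₂ : 0 < c₂) (P Q : Polynomial ℤ) :
    MeasureTheory.Integrable (FF c₁ c₂ P Q) := by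
  obtain ⟨d, C, hC, hb⟩ := master_bound P Q
  have hg : MeasureTheory.Integrable (fun p : ℝ × ℝ =>
      C * (((1 + p.1 ^ 2) ^ d * Real.exp (-c₁ * p.1 ^ 2)) *
        ((1 + p.2 ^ 2) ^ d * Real.exp (-c₂ * p.2 ^ 2)))) := by
    have := ((integrable_polyweight h₁ d).mul_prod (integrable_polyweight h₂ d)).const_mul C
    rwa [← Measure.volume_eq_prod] at this
  refine MeasureTheory.Integrable.mono' hg
    ((continuous_FF c₁ c₂ P Q).aestronglyMeasurable) ?_
  exact Eventually.of_forall (norm_FF_le c₁ c₂ P Q hb)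

lemma integrable_FF_sliceX {c₁ c₂ : ℝ} (h₁ : 0 < c₁) (P Q : Polynomial ℤ) (y : ℝ) :
    MeasureTheory.Integrable (fun x : ℝ => FF c₁ c₂ P Q (x, y)) := by
  obtain ⟨d, C, hC, hb⟩ := master_bound P Q
  have hg : MeasureTheory.Integrable (fun x : ℝ =>
      (C * ((1 + y ^ 2) ^ d * Real.exp (-c₂ * y ^ 2))) *
        ((1 + x ^ 2) ^ d * Real.exp (-c₁ * x ^ 2))) :=
    (integrable_polyweight h₁ d).const_mul _
  refine MeasureTheory.Integrable.mono' hg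
    ((continuous_FF c₁ c₂ P Q).comp (Continuous.prodMk_left y)).aestronglyMeasurable ?_
  refine Eventually.of_forall fun x => ?_
  refine (norm_FF_le c₁ c₂ P Q hb (x, y)).trans_eq ?_
  ring

lemma integrable_FF_sliceY {c₁ c₂ : ℝ} (h₂ : 0 < c₂) (P Q : Polynomial ℤ) (x : ℝ) :
    MeasureTheory.Integrable (fun y : ℝ => FF c₁ c₂ P Q (x, y)) := by
  obtain ⟨d, C, hC, hb⟩ := master_bound P Q
  have hg : MeasureTheory.Integrable (fun y : ℝ =>
      (C * ((1 + x ^ 2) ^ d * Real.exp (-c₁ * x ^ 2))) *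
        ((1 + y ^ 2) ^ d * Real.exp (-c₂ * y ^ 2))) :=
    (integrable_polyweight h₂ d).const_mul _
  refine MeasureTheory.Integrable.mono' hg
    ((continuous_FF c₁ c₂ P Q).comp (Continuous.prodMk_right x)).aestronglyMeasurable ?_
  refine Eventually.of_forall fun y => ?_
  refine (norm_FF_le c₁ c₂ P Q hb (x, y)).trans_eq ?_
  ring

lemma tendsto_FF_sliceX {c₁ c₂ : ℝ} (h₁ : 0 < c₁) (P Q : Polynomial ℤ) (y : ℝ) :
    Tendsto (fun x : ℝ => FF c₁ c₂ P Q (x, y)) (cocompact ℝ) (𝓝 0) := by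
  obtain ⟨d, C, hC, hb⟩ := master_bound P Q
  refine squeeze_zero_norm
    (a := fun x => (C * ((1 + y ^ 2) ^ d * Real.exp (-c₂ * y ^ 2))) *
      ((1 + x ^ 2) ^ d * Real.exp (-c₁ * x ^ 2)))
    (fun x => (norm_FF_le c₁ c₂ P Q hb (x, y)).trans_eq (by ring)) ?_
  have := (tendsto_polyweight h₁ d).const_mul (C * ((1 + y ^ 2) ^ d * Real.exp (-c₂ * y ^ 2)))
  simpa using this

lemma tendsto_FF_sliceY {c₁ c₂ : ℝ} (h₂ : 0 < c₂) (P Q : Polynomial ℤ) (x : ℝ) :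
    Tendsto (fun y : ℝ => FF c₁ c₂ P Q (x, y)) (cocompact ℝ) (𝓝 0) := by
  obtain ⟨d, C, hC, hb⟩ := master_bound P Q
  refine squeeze_zero_norm
    (a := fun y => (C * ((1 + x ^ 2) ^ d * Real.exp (-c₁ * x ^ 2))) *
      ((1 + y ^ 2) ^ d * Real.exp (-c₂ * y ^ 2)))
    (fun y => (norm_FF_le c₁ c₂ P Q hb (x, y)).trans_eq (by ring)) ?_
  have := (tendsto_polyweight h₂ d).const_mul (C * ((1 + x ^ 2) ^ d * Real.exp (-c₁ * x ^ 2)))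
  simpa using this

lemma hasDerivAt_ofReal' (x : ℝ) : HasDerivAt (fun t : ℝ => (t : ℂ)) 1 x := by
  simpa using (hasDerivAt_id x).ofReal_comp

lemma hasDerivAt_coe_comp {f : ℝ → ℝ} {f' x : ℝ} (hf : HasDerivAt f f' x) :
    HasDerivAt (fun t => (f t : ℂ)) (f' : ℂ) x := by
  simpa using hf.ofReal_comp

lemma hasDerivAt_ZcX (y x : ℝ) : HasDerivAt (fun x : ℝ => Zc (x, y)) 1 x := by
  simpa [Zc] using (hasDerivAt_ofReal' x).add_const ((y : ℂ) * Complex.I)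

lemma hasDerivAt_ZbX (y x : ℝ) : HasDerivAt (fun x : ℝ => Zb (x, y)) 1 x := by
  simpa [Zb] using (hasDerivAt_ofReal' x).sub_const ((y : ℂ) * Complex.I)

lemma hasDerivAt_ZcY (x y : ℝ) : HasDerivAt (fun y : ℝ => Zc (x, y)) Complex.I y := by
  simpa [Zc] using (HasDerivAt.const_add ((x : ℂ))
    ((hasDerivAt_ofReal' y).mul_const Complex.I))

lemma hasDerivAt_ZbY (x y : ℝ) : HasDerivAt (fun y : ℝ => Zb (x, y)) (-Complex.I) y := by
  simpa [Zb] using (HasDerivAt.const_sub ((x : ℂ))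
    ((hasDerivAt_ofReal' y).mul_const Complex.I))

lemma hasDerivAt_GGX (c₁ c₂ y x : ℝ) :
    HasDerivAt (fun x : ℝ => GG c₁ c₂ (x, y)) (-(2 * c₁ * x) * GG c₁ c₂ (x, y)) x := by
  have h1 : HasDerivAt (fun x : ℝ => -c₁ * x ^ 2) (-c₁ * (2 * x)) x := by
    simpa using (hasDerivAt_pow 2 x).const_mul (-c₁)
  have h2 := (h1.exp).mul_const (Real.exp (-c₂ * y ^ 2))
  refine h2.congr_deriv ?_
  simp [GG]; ring

lemma hasDerivAt_GGY (c₁ c₂ x y : ℝ) :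
    HasDerivAt (fun y : ℝ => GG c₁ c₂ (x, y)) (-(2 * c₂ * y) * GG c₁ c₂ (x, y)) y := by
  have h1 : HasDerivAt (fun y : ℝ => -c₂ * y ^ 2) (-c₂ * (2 * y)) y := by
    simpa using (hasDerivAt_pow 2 y).const_mul (-c₂)
  have h2 := HasDerivAt.const_mul (Real.exp (-c₁ * x ^ 2)) (h1.exp)
  refine h2.congr_deriv ?_
  simp [GG]; ring

lemma hasDerivAt_FF_X (c₁ c₂ : ℝ) (P Q : Polynomial ℤ) (y x : ℝ) :
    HasDerivAt (fun x : ℝ => FF c₁ c₂ P Q (x, y))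
      (FF c₁ c₂ (derivative P) Q (x, y) + FF c₁ c₂ P (derivative Q) (x, y)
        + (-(2 * c₁ * x) : ℝ) * FF c₁ c₂ P Q (x, y)) x := by
  have hP : HasDerivAt (fun x : ℝ => (aeval (Zc (x, y)) P : ℂ))
      (aeval (Zc (x, y)) (derivative P)) x := by
    simpa [Function.comp_def] using (P.hasDerivAt_aeval (Zc (x, y))).comp x (hasDerivAt_ZcX y x)
  have hQ : HasDerivAt (fun x : ℝ => (aeval (Zb (x, y)) Q : ℂ))
      (aeval (Zb (x, y)) (derivative Q)) x := by
    simpa [Function.comp_def] using (Q.hasDerivAt_aeval (Zb (x, y))).comp x (hasDerivAt_ZbX y x)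
  have hG : HasDerivAt (fun x : ℝ => (GG c₁ c₂ (x, y) : ℂ))
      ((-(2 * c₁ * x) * GG c₁ c₂ (x, y) : ℝ) : ℂ) x :=
    hasDerivAt_coe_comp (hasDerivAt_GGX c₁ c₂ y x)
  have h := (hP.fun_mul hQ).fun_mul hG
  refine h.congr_deriv ?_
  simp only [FF]
  push_cast
  ring

lemma hasDerivAt_FF_Y (c₁ c₂ : ℝ) (P Q : Polynomial ℤ) (x y : ℝ) :
    HasDerivAt (fun y : ℝ => FF c₁ c₂ P Q (x, y))
      (Complex.I * FF c₁ c₂ (derivative P) Q (x, y)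
        - Complex.I * FF c₁ c₂ P (derivative Q) (x, y)
        + (-(2 * c₂ * y) : ℝ) * FF c₁ c₂ P Q (x, y)) y := by
  have hP : HasDerivAt (fun y : ℝ => (aeval (Zc (x, y)) P : ℂ))
      (aeval (Zc (x, y)) (derivative P) * Complex.I) y :=
    (P.hasDerivAt_aeval (Zc (x, y))).comp y (h := fun y : ℝ => Zc (x, y)) (hasDerivAt_ZcY x y)
  have hQ : HasDerivAt (fun y : ℝ => (aeval (Zb (x, y)) Q : ℂ))
      (aeval (Zb (x, y)) (derivative Q) * (-Complex.I)) y :=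
    (Q.hasDerivAt_aeval (Zb (x, y))).comp y (h := fun y : ℝ => Zb (x, y)) (hasDerivAt_ZbY x y)
  have hG : HasDerivAt (fun y : ℝ => (GG c₁ c₂ (x, y) : ℂ))
      ((-(2 * c₂ * y) * GG c₁ c₂ (x, y) : ℝ) : ℂ) y :=
    hasDerivAt_coe_comp (hasDerivAt_GGY c₁ c₂ x y)
  have h := (hP.fun_mul hQ).fun_mul hG
  refine h.congr_deriv ?_
  simp only [FF]
  push_cast
  ring

lemma integral_deriv_eq_zero {F f : ℝ → ℂ} (hF : ∀ x, HasDerivAt F (f x) x)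
    (hf : MeasureTheory.Integrable f) (h0 : Tendsto F (cocompact ℝ) (𝓝 0)) :
    ∫ x : ℝ, f x = 0 := by
  have hTop : Tendsto F atTop (𝓝 0) :=
    h0.mono_left (by rw [cocompact_eq_atBot_atTop]; exact le_sup_right)
  have hBot : Tendsto F atBot (𝓝 0) :=
    h0.mono_left (by rw [cocompact_eq_atBot_atTop]; exact le_sup_left)
  have hIoi : ∫ x in Set.Ioi (0:ℝ), f x = 0 - F 0 :=
    MeasureTheory.integral_Ioi_of_hasDerivAt_of_tendsto
      ((hF 0).continuousAt.continuousWithinAt) (fun x _ => hF x) hf.integrableOn hTop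
  have hIic : ∫ x in Set.Iic (0:ℝ), f x = F 0 - 0 :=
    MeasureTheory.integral_Iic_of_hasDerivAt_of_tendsto
      ((hF 0).continuousAt.continuousWithinAt) (fun x _ => hF x) hf.integrableOn hBot
  have hsum := intervalIntegral.integral_Iic_add_Ioi
    (hf.integrableOn (s := Set.Iic 0)) (hf.integrableOn (s := Set.Ioi 0))
  rw [hIic, hIoi] at hsum
  rw [← hsum]
  ring

lemma keyX (c₁ c₂ : ℝ) (P Q : Polynomial ℤ) (p : ℝ × ℝ) :
    ((-(2 * c₁ * p.1) : ℝ) : ℂ) * FF c₁ c₂ P Q p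
      = -(c₁ * (FF c₁ c₂ (X * P) Q p + FF c₁ c₂ P (X * Q) p)) := by
  simp only [FF, map_mul, aeval_X, Zc, Zb]
  push_cast
  ring

lemma keyY (c₁ c₂ : ℝ) (P Q : Polynomial ℤ) (p : ℝ × ℝ) :
    ((-(2 * c₂ * p.2) : ℝ) : ℂ) * FF c₁ c₂ P Q p
      = Complex.I * (c₂ * (FF c₁ c₂ (X * P) Q p - FF c₁ c₂ P (X * Q) p)) := by
  simp only [FF, map_mul, aeval_X, Zc, Zb]
  push_cast
  linear_combination (-(2 * (c₂:ℂ) * p.2) * ((aeval ((p.1:ℂ) + (p.2:ℂ) * Complex.I)) P *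
    (aeval ((p.1:ℂ) - (p.2:ℂ) * Complex.I)) Q * ((GG c₁ c₂ p : ℝ) : ℂ))) * Complex.I_sq

lemma divX {c₁ c₂ : ℝ} (h₁ : 0 < c₁) (h₂ : 0 < c₂) (P Q : Polynomial ℤ) :
    TT c₁ c₂ (derivative P) Q + TT c₁ c₂ P (derivative Q)
      = c₁ * (TT c₁ c₂ (X * P) Q + TT c₁ c₂ P (X * Q)) := by
  set D : ℝ × ℝ → ℂ := fun p =>
    FF c₁ c₂ (derivative P) Q p + FF c₁ c₂ P (derivative Q) p
      + ((-(2 * c₁ * p.1) : ℝ) : ℂ) * FF c₁ c₂ P Q p with hD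
  have hthird : MeasureTheory.Integrable
      (fun p : ℝ × ℝ => ((-(2 * c₁ * p.1) : ℝ) : ℂ) * FF c₁ c₂ P Q p) := by
    refine MeasureTheory.Integrable.congr ?_ (Eventually.of_forall fun p => (keyX c₁ c₂ P Q p).symm)
    exact (((integrable_FF h₁ h₂ (X * P) Q).add (integrable_FF h₁ h₂ P (X * Q))).const_mul c₁).neg
  have hDint : MeasureTheory.Integrable D :=
    ((integrable_FF h₁ h₂ (derivative P) Q).add (integrable_FF h₁ h₂ P (derivative Q))).add hthird
  have hzero : ∫ p : ℝ × ℝ, D p = 0 := by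
    have h5 : ∫ p : ℝ × ℝ, D p = ∫ y : ℝ, ∫ x : ℝ, D (x, y) := by
      rw [Measure.volume_eq_prod]
      exact MeasureTheory.integral_prod_symm D (by rwa [← Measure.volume_eq_prod])
    rw [h5]
    have h6 : ∀ y : ℝ, ∫ x : ℝ, D (x, y) = 0 := by
      intro y
      refine integral_deriv_eq_zero (F := fun x => FF c₁ c₂ P Q (x, y))
        (fun x => hasDerivAt_FF_X c₁ c₂ P Q y x) ?_ (tendsto_FF_sliceX h₁ P Q y)
      refine ((integrable_FF_sliceX h₁ (derivative P) Q y).add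
        (integrable_FF_sliceX h₁ P (derivative Q) y)).add ?_
      refine MeasureTheory.Integrable.congr ?_
        (Eventually.of_forall fun x => (keyX c₁ c₂ P Q (x, y)).symm)
      exact (((integrable_FF_sliceX h₁ (X * P) Q y).add
        (integrable_FF_sliceX h₁ P (X * Q) y)).const_mul c₁).neg
    simp [h6]
  have hsplit : ∫ p : ℝ × ℝ, D p
      = TT c₁ c₂ (derivative P) Q + TT c₁ c₂ P (derivative Q)
        - c₁ * (TT c₁ c₂ (X * P) Q + TT c₁ c₂ P (X * Q)) := by
    rw [hD]
    have hadd1 : MeasureTheory.Integrable (fun p : ℝ × ℝ =>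
        FF c₁ c₂ (derivative P) Q p + FF c₁ c₂ P (derivative Q) p) :=
      (integrable_FF h₁ h₂ (derivative P) Q).add (integrable_FF h₁ h₂ P (derivative Q))
    rw [MeasureTheory.integral_add hadd1 hthird]
    rw [MeasureTheory.integral_add (integrable_FF h₁ h₂ (derivative P) Q)
      (integrable_FF h₁ h₂ P (derivative Q))]
    have h7 : ∫ p : ℝ × ℝ, ((-(2 * c₁ * p.1) : ℝ) : ℂ) * FF c₁ c₂ P Q p
        = -(c₁ * (TT c₁ c₂ (X * P) Q + TT c₁ c₂ P (X * Q))) := by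
      simp only [keyX c₁ c₂ P Q]
      rw [MeasureTheory.integral_neg]
      congr 1
      rw [show (fun p : ℝ × ℝ => c₁ * (FF c₁ c₂ (X * P) Q p + FF c₁ c₂ P (X * Q) p))
        = fun p : ℝ × ℝ => (c₁ : ℂ) * (FF c₁ c₂ (X * P) Q p + FF c₁ c₂ P (X * Q) p) from rfl]
      rw [MeasureTheory.integral_const_mul]
      rw [MeasureTheory.integral_add (integrable_FF h₁ h₂ (X * P) Q) (integrable_FF h₁ h₂ P (X * Q))]
      rfl
    rw [h7]
    rfl
  rw [hzero] at hsplit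
  linear_combination -hsplit

lemma divY {c₁ c₂ : ℝ} (h₁ : 0 < c₁) (h₂ : 0 < c₂) (P Q : Polynomial ℤ) :
    TT c₁ c₂ (derivative P) Q - TT c₁ c₂ P (derivative Q)
      = -(c₂ * (TT c₁ c₂ (X * P) Q - TT c₁ c₂ P (X * Q))) := by
  set D : ℝ × ℝ → ℂ := fun p =>
    Complex.I * FF c₁ c₂ (derivative P) Q p - Complex.I * FF c₁ c₂ P (derivative Q) p
      + ((-(2 * c₂ * p.2) : ℝ) : ℂ) * FF c₁ c₂ P Q p with hD
  have hthird : MeasureTheory.Integrable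
      (fun p : ℝ × ℝ => ((-(2 * c₂ * p.2) : ℝ) : ℂ) * FF c₁ c₂ P Q p) := by
    refine MeasureTheory.Integrable.congr ?_ (Eventually.of_forall fun p => (keyY c₁ c₂ P Q p).symm)
    exact (((integrable_FF h₁ h₂ (X * P) Q).sub (integrable_FF h₁ h₂ P (X * Q))).const_mul c₂).const_mul Complex.I
  have hDint : MeasureTheory.Integrable D :=
    (((integrable_FF h₁ h₂ (derivative P) Q).const_mul Complex.I).sub
      ((integrable_FF h₁ h₂ P (derivative Q)).const_mul Complex.I)).add hthird
  have hzero : ∫ p : ℝ × ℝ, D p = 0 := by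
    have h5 : ∫ p : ℝ × ℝ, D p = ∫ x : ℝ, ∫ y : ℝ, D (x, y) := by
      rw [Measure.volume_eq_prod]
      exact MeasureTheory.integral_prod D (by rwa [← Measure.volume_eq_prod])
    rw [h5]
    have h6 : ∀ x : ℝ, ∫ y : ℝ, D (x, y) = 0 := by
      intro x
      refine integral_deriv_eq_zero (F := fun y => FF c₁ c₂ P Q (x, y))
        (fun y => hasDerivAt_FF_Y c₁ c₂ P Q x y) ?_ (tendsto_FF_sliceY h₂ P Q x)
      refine (((integrable_FF_sliceY h₂ (derivative P) Q x).const_mul Complex.I).sub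
        ((integrable_FF_sliceY h₂ P (derivative Q) x).const_mul Complex.I)).add ?_
      refine MeasureTheory.Integrable.congr ?_
        (Eventually.of_forall fun y => (keyY c₁ c₂ P Q (x, y)).symm)
      exact (((integrable_FF_sliceY h₂ (X * P) Q x).sub
        (integrable_FF_sliceY h₂ P (X * Q) x)).const_mul c₂).const_mul Complex.I
    simp [h6]
  have hsplit : ∫ p : ℝ × ℝ, D p
      = Complex.I * (TT c₁ c₂ (derivative P) Q - TT c₁ c₂ P (derivative Q)
          + c₂ * (TT c₁ c₂ (X * P) Q - TT c₁ c₂ P (X * Q))) := by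
    rw [hD]
    have hsub1 : MeasureTheory.Integrable (fun p : ℝ × ℝ =>
        Complex.I * FF c₁ c₂ (derivative P) Q p - Complex.I * FF c₁ c₂ P (derivative Q) p) :=
      ((integrable_FF h₁ h₂ (derivative P) Q).const_mul Complex.I).sub
        ((integrable_FF h₁ h₂ P (derivative Q)).const_mul Complex.I)
    rw [MeasureTheory.integral_add hsub1 hthird]
    have hs := MeasureTheory.integral_sub
      ((integrable_FF h₁ h₂ (derivative P) Q).const_mul Complex.I : MeasureTheory.Integrable
        (fun p : ℝ × ℝ => Complex.I * FF c₁ c₂ (derivative P) Q p) volume)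
      ((integrable_FF h₁ h₂ P (derivative Q)).const_mul Complex.I : MeasureTheory.Integrable
        (fun p : ℝ × ℝ => Complex.I * FF c₁ c₂ P (derivative Q) p) volume)
    rw [hs]
    rw [MeasureTheory.integral_const_mul, MeasureTheory.integral_const_mul]
    have h7 : ∫ p : ℝ × ℝ, ((-(2 * c₂ * p.2) : ℝ) : ℂ) * FF c₁ c₂ P Q p
        = Complex.I * (c₂ * (TT c₁ c₂ (X * P) Q - TT c₁ c₂ P (X * Q))) := by
      simp only [keyY c₁ c₂ P Q]
      rw [MeasureTheory.integral_const_mul]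
      congr 1
      rw [MeasureTheory.integral_const_mul]
      congr 1
      rw [MeasureTheory.integral_sub (integrable_FF h₁ h₂ (X * P) Q) (integrable_FF h₁ h₂ P (X * Q))]
      rfl
    rw [h7]
    have e1 : TT c₁ c₂ (derivative P) Q = ∫ p : ℝ × ℝ, FF c₁ c₂ (derivative P) Q p := rfl
    have e2 : TT c₁ c₂ P (derivative Q) = ∫ p : ℝ × ℝ, FF c₁ c₂ P (derivative Q) p := rfl
    rw [← e1, ← e2]
    ring
  rw [hzero] at hsplit
  have hI := Complex.I_ne_zero
  have := hsplit.symm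
  rw [mul_comm] at this
  have h8 := mul_eq_zero.mp this
  rcases h8 with h8 | h8
  · linear_combination h8
  · exact absurd h8 hI

lemma FF_C_mul_left (c₁ c₂ : ℝ) (n : ℤ) (P Q : Polynomial ℤ) (p : ℝ × ℝ) :
    FF c₁ c₂ (C n * P) Q p = (n : ℂ) * FF c₁ c₂ P Q p := by
  simp only [FF, map_mul, aeval_C, algebraMap_int_eq, eq_intCast, map_intCast]
  ring

lemma FF_C_mul_right (c₁ c₂ : ℝ) (n : ℤ) (P Q : Polynomial ℤ) (p : ℝ × ℝ) :
    FF c₁ c₂ P (C n * Q) p = (n : ℂ) * FF c₁ c₂ P Q p := by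
  simp only [FF, map_mul, aeval_C, algebraMap_int_eq, eq_intCast, map_intCast]
  ring

lemma TT_C_mul_left (c₁ c₂ : ℝ) (n : ℤ) (P Q : Polynomial ℤ) :
    TT c₁ c₂ (C n * P) Q = (n : ℂ) * TT c₁ c₂ P Q := by
  unfold TT
  simp only [FF_C_mul_left]
  exact MeasureTheory.integral_const_mul _ _

lemma TT_C_mul_right (c₁ c₂ : ℝ) (n : ℤ) (P Q : Polynomial ℤ) :
    TT c₁ c₂ P (C n * Q) = (n : ℂ) * TT c₁ c₂ P Q := by
  unfold TT
  simp only [FF_C_mul_right]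
  exact MeasureTheory.integral_const_mul _ _

lemma TT_add_left {c₁ c₂ : ℝ} (h₁ : 0 < c₁) (h₂ : 0 < c₂) (P P' Q : Polynomial ℤ) :
    TT c₁ c₂ (P + P') Q = TT c₁ c₂ P Q + TT c₁ c₂ P' Q := by
  unfold TT
  have he : ∀ p : ℝ × ℝ, FF c₁ c₂ (P + P') Q p = FF c₁ c₂ P Q p + FF c₁ c₂ P' Q p := by
    intro p; simp only [FF, map_add]; ring
  simp only [he]
  exact MeasureTheory.integral_add (integrable_FF h₁ h₂ P Q) (integrable_FF h₁ h₂ P' Q)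

lemma TT_add_right {c₁ c₂ : ℝ} (h₁ : 0 < c₁) (h₂ : 0 < c₂) (P Q Q' : Polynomial ℤ) :
    TT c₁ c₂ P (Q + Q') = TT c₁ c₂ P Q + TT c₁ c₂ P Q' := by
  unfold TT
  have he : ∀ p : ℝ × ℝ, FF c₁ c₂ P (Q + Q') p = FF c₁ c₂ P Q p + FF c₁ c₂ P Q' p := by
    intro p; simp only [FF, map_add]; ring
  simp only [he]
  exact MeasureTheory.integral_add (integrable_FF h₁ h₂ P Q) (integrable_FF h₁ h₂ P Q')

noncomputable def Jf (θ : ℝ) (k m : ℕ) : ℂ := TT (2/(θ+1)) (2/(θ-1)) (Hp k) (Hp m)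

lemma twoX_Hp (k : ℕ) : C (2:ℤ) * (X * Hp k) = Hp (k+1) + C (2*(k:ℤ)) * Hp (k-1) := by
  rw [Hp_succ k, derivative_Hp' k]
  have h2 : (C (2:ℤ) : Polynomial ℤ) = 2 := map_ofNat C 2
  rw [h2]
  push_cast
  ring

lemma recAB {θ : ℝ} (hθ : 1 < θ) (k m : ℕ) :
    Jf θ (k+1) m = 2*(θ:ℂ)*m*Jf θ k (m-1) ∧ Jf θ k (m+1) = 2*(θ:ℂ)*k*Jf θ (k-1) m := by
  have h₁ : (0:ℝ) < 2/(θ+1) := div_pos two_pos (by linarith)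
  have h₂ : (0:ℝ) < 2/(θ-1) := div_pos two_pos (by linarith)
  have hu : (θ:ℂ) + 1 ≠ 0 := by
    intro h; have := congrArg Complex.re h; simp at this; linarith
  have hv : (θ:ℂ) - 1 ≠ 0 := by
    intro h; have := congrArg Complex.re h; simp at this; linarith
  have hdl : TT (2/(θ+1)) (2/(θ-1)) (derivative (Hp k)) (Hp m) = 2*(k:ℂ) * Jf θ (k-1) m := by
    rw [derivative_Hp' k, TT_C_mul_left]; push_cast; rfl
  have hdr : TT (2/(θ+1)) (2/(θ-1)) (Hp k) (derivative (Hp m)) = 2*(m:ℂ) * Jf θ k (m-1) := by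
    rw [derivative_Hp' m, TT_C_mul_right]; push_cast; rfl
  have hXl : TT (2/(θ+1)) (2/(θ-1)) (X * Hp k) (Hp m)
      = (Jf θ (k+1) m + 2*(k:ℂ)*Jf θ (k-1) m)/2 := by
    have h2' : (2:ℂ) * TT (2/(θ+1)) (2/(θ-1)) (X * Hp k) (Hp m)
        = Jf θ (k+1) m + 2*(k:ℂ)*Jf θ (k-1) m := by
      calc (2:ℂ) * TT (2/(θ+1)) (2/(θ-1)) (X * Hp k) (Hp m)
          = TT (2/(θ+1)) (2/(θ-1)) (C (2:ℤ) * (X * Hp k)) (Hp m) := by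
            rw [TT_C_mul_left]; norm_num
        _ = TT (2/(θ+1)) (2/(θ-1)) (Hp (k+1) + C (2*(k:ℤ)) * Hp (k-1)) (Hp m) := by
            rw [twoX_Hp]
        _ = Jf θ (k+1) m + 2*(k:ℂ)*Jf θ (k-1) m := by
            rw [TT_add_left h₁ h₂, TT_C_mul_left]; push_cast; rfl
    rw [eq_div_iff (two_ne_zero' ℂ)]
    linear_combination h2'
  have hXr : TT (2/(θ+1)) (2/(θ-1)) (Hp k) (X * Hp m)
      = (Jf θ k (m+1) + 2*(m:ℂ)*Jf θ k (m-1))/2 := by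
    have h2' : (2:ℂ) * TT (2/(θ+1)) (2/(θ-1)) (Hp k) (X * Hp m)
        = Jf θ k (m+1) + 2*(m:ℂ)*Jf θ k (m-1) := by
      calc (2:ℂ) * TT (2/(θ+1)) (2/(θ-1)) (Hp k) (X * Hp m)
          = TT (2/(θ+1)) (2/(θ-1)) (Hp k) (C (2:ℤ) * (X * Hp m)) := by
            rw [TT_C_mul_right]; norm_num
        _ = TT (2/(θ+1)) (2/(θ-1)) (Hp k) (Hp (m+1) + C (2*(m:ℤ)) * Hp (m-1)) := by
            rw [twoX_Hp]
        _ = Jf θ k (m+1) + 2*(m:ℂ)*Jf θ k (m-1) := by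
            rw [TT_add_right h₁ h₂, TT_C_mul_right]; push_cast; rfl
    rw [eq_div_iff (two_ne_zero' ℂ)]
    linear_combination h2'
  have eX := divX h₁ h₂ (Hp k) (Hp m)
  have eY := divY h₁ h₂ (Hp k) (Hp m)
  rw [hdl, hdr, hXl, hXr] at eX eY
  have hc₁ : ((2/(θ+1) : ℝ) : ℂ) = 2/((θ:ℂ)+1) := by push_cast; ring
  have hc₂ : ((2/(θ-1) : ℝ) : ℂ) = 2/((θ:ℂ)-1) := by push_cast; ring
  rw [hc₁] at eX
  rw [hc₂] at eY
  field_simp [hu] at eX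
  field_simp [hv] at eY
  constructor
  · set A := Jf θ (k+1) m; set B := Jf θ k (m+1); set Pk := Jf θ (k-1) m; set Qm := Jf θ k (m-1)
    linear_combination (-1/2 : ℂ) * eX + (1/2 : ℂ) * eY
  · linear_combination (-1/2 : ℂ) * eX + (-1/2 : ℂ) * eY

lemma Jval {θ : ℝ} (hθ : 1 < θ) : ∀ k m : ℕ,
    Jf θ k m = if k = m then (2*(θ:ℂ))^k * (k.factorial : ℂ) * Jf θ 0 0 else 0 := by
  intro k
  induction k with
  | zero =>
      intro m
      cases m with
      | zero => simp
      | succ m' =>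
          have h := (recAB hθ 0 m').2
          simp only [Nat.cast_zero, mul_zero, zero_mul] at h
          rw [h, if_neg (by omega)]
  | succ k ih =>
      intro m
      cases m with
      | zero =>
          have h := (recAB hθ k 0).1
          simp only [Nat.cast_zero, mul_zero, zero_mul] at h
          rw [h, if_neg (by omega)]
      | succ m' =>
          have h := (recAB hθ k (m' + 1)).1
          simp only [Nat.add_sub_cancel] at h
          rw [h, ih m']
          by_cases hkm : k = m'
          · subst hkm
            rw [if_pos rfl, if_pos rfl]
            push_cast [Nat.factorial_succ]
            ring
          · rw [if_neg hkm, if_neg (by omega)]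
            ring

lemma J00 {θ : ℝ} (hθ : 1 < θ) :
    Jf θ 0 0 = ((Real.sqrt (π / (2/(θ+1))) * Real.sqrt (π / (2/(θ-1))) : ℝ) : ℂ) := by
  have h1 : ∀ p : ℝ × ℝ, FF (2/(θ+1)) (2/(θ-1)) (Hp 0) (Hp 0) p
      = ((GG (2/(θ+1)) (2/(θ-1)) p : ℝ) : ℂ) := by
    intro p; simp [FF, Hp_zero]
  unfold Jf TT
  simp only [h1]
  have h2 : (∫ p : ℝ × ℝ, ((GG (2/(θ+1)) (2/(θ-1)) p : ℝ) : ℂ))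
      = ((∫ p : ℝ × ℝ, GG (2/(θ+1)) (2/(θ-1)) p : ℝ) : ℂ) := integral_ofReal
  rw [h2, Complex.ofReal_inj]
  unfold GG
  rw [Measure.volume_eq_prod]
  rw [MeasureTheory.integral_prod_mul (f := fun x : ℝ => Real.exp (-(2/(θ+1)) * x ^ 2))
    (g := fun y : ℝ => Real.exp (-(2/(θ-1)) * y ^ 2))]
  rw [integral_gaussian, integral_gaussian]

lemma conj_aeval (z : ℂ) (P : Polynomial ℤ) :
    (starRingEnd ℂ) (aeval z P) = aeval ((starRingEnd ℂ) z) P := by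
  simpa using (aeval_algHom_apply ((starRingEnd ℂ).toIntAlgHom) z P).symm

lemma sqrt_fact {θ : ℝ} (hθ : 1 < θ) :
    Real.sqrt (π / (2/(θ+1))) * Real.sqrt (π / (2/(θ-1))) = π * Real.sqrt (θ^2-1) / 2 := by
  have hπ := Real.pi_pos
  rw [← Real.sqrt_mul (by positivity)]
  have h : π / (2/(θ+1)) * (π / (2/(θ-1))) = (π/2)^2 * (θ^2-1) := by
    field_simp
    ring
  rw [h, Real.sqrt_mul (by positivity), Real.sqrt_sq (by positivity)]
  ring

theorem hermite_orthogonality_complex (θ : ℝ) (hθ : 1 < θ) (k m : ℕ) :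
    (2 / Real.sqrt (θ ^ 2 - 1) : ℂ) *
      ∫ z : ℂ, physHermite k z * (starRingEnd ℂ) (physHermite m z) *
        (Real.exp (-2 * z.re ^ 2 / (θ + 1) - 2 * z.im ^ 2 / (θ - 1)) : ℂ)
    = if k = m then (π * (2 * θ) ^ k * k.factorial : ℂ) else 0 := by
  have hint : (∫ z : ℂ, physHermite k z * (starRingEnd ℂ) (physHermite m z) *
        (Real.exp (-2 * z.re ^ 2 / (θ + 1) - 2 * z.im ^ 2 / (θ - 1)) : ℂ)) = Jf θ k m := by
    rw [Jf]
    rw [TT]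
    rw [← MeasurePreserving.integral_comp (Complex.volume_preserving_equiv_real_prod.symm)
      (Complex.measurableEquivRealProd.symm.measurableEmbedding)]
    refine MeasureTheory.integral_congr_ae (Eventually.of_forall fun p => ?_)
    dsimp only
    rw [Complex.measurableEquivRealProd_symm_apply]
    have hz : (⟨p.1, p.2⟩ : ℂ) = Zc p := by
      rw [Complex.mk_eq_add_mul_I]; rfl
    have hconj : (starRingEnd ℂ) (⟨p.1, p.2⟩ : ℂ) = Zb p := by
      apply Complex.ext <;> simp [Zb]
    rw [physHermite_eq, physHermite_eq, conj_aeval]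
    rw [FF, hconj]
    have hre : (⟨p.1, p.2⟩ : ℂ).re = p.1 := rfl
    have him : (⟨p.1, p.2⟩ : ℂ).im = p.2 := rfl
    rw [hre, him, hz]
    congr 1
    rw [GG]
    norm_cast
    rw [← Real.exp_add]
    congr 1
    field_simp
    push_cast [Int.cast_negSucc]
    ring
  rw [hint, Jval hθ k m, J00 hθ]
  have hs0 : (0:ℝ) < Real.sqrt (θ^2-1) := Real.sqrt_pos.mpr (by nlinarith)
  have hs : ((Real.sqrt (θ^2-1) : ℝ) : ℂ) ≠ 0 := Complex.ofReal_ne_zero.mpr (ne_of_gt hs0)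
  by_cases hkm : k = m
  · rw [if_pos hkm, if_pos hkm]
    rw [sqrt_fact hθ]
    push_cast
    field_simp
  · rw [if_neg hkm, if_neg hkm, mul_zero]
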